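/- Let k > 0, d > 0, and for t ∈ ℝ consider the curve ξ = -π/d + it. Then Re α(-π/d + it) ≤ Re α(-π/d) = -√((π/d)² - k²) for all t ∈ ℝ, where α(ξ) = -√(i(ξ-k))√(-i(ξ+k)) and k < π/d. -/

import Mathlib

set_option maxHeartbeats 1000000

noncomputable def csqrt (z : ℂ) : ℂ := z ^ (1/2 : ℂ)

/-- α(ξ) = -√(i(ξ-k))·√(-i(ξ+k)) with principal square roots. -/
noncomputable def alphaFn (k : ℝ) (ξ : ℂ) : ℂ :=
  -(csqrt (Complex.I * (ξ - (k : ℂ))) * csqrt (-Complex.I * (ξ + (k : ℂ))))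

lemma re_csqrt_nonneg (z : ℂ) : 0 ≤ (csqrt z).re := by
  unfold csqrt
  rcases eq_or_ne z 0 with rfl | hz
  · simp [Complex.zero_cpow (by norm_num : (1/2:ℂ) ≠ 0)]
  · rw [Complex.cpow_def_of_ne_zero hz, Complex.exp_re]
    apply mul_nonneg (Real.exp_nonneg _)
    apply Real.cos_nonneg_of_mem_Icc
    constructor
    · simp only [Complex.mul_im, Complex.log_im]
      have := Complex.neg_pi_lt_arg z
      norm_num
      nlinarith [Real.pi_pos]
    · simp only [Complex.mul_im, Complex.log_im]
      have := Complex.arg_le_pi z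
      norm_num
      nlinarith [Real.pi_pos]

lemma csqrt_unique {z w : ℂ} (hw : w ^ 2 = z) (hre : 0 < w.re) : csqrt z = w := by
  have hwne : w ≠ 0 := fun h => by simp [h] at hre
  have hz : z ≠ 0 := by rw [← hw]; exact pow_ne_zero _ hwne
  have hsq : csqrt z * csqrt z = w * w := by
    unfold csqrt
    rw [← Complex.cpow_add _ _ hz]
    norm_num
    rw [← hw]; ring
  rcases mul_self_eq_mul_self_iff.mp hsq with h | h
  · exact h
  · exfalso
    have := re_csqrt_nonneg z
    rw [h] at this
    simp only [Complex.neg_re] at this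
    linarith

lemma csqrt_of_im_ne {z : ℂ} (h : z.im ≠ 0) :
    csqrt z = (Real.sqrt ((‖z‖ + z.re)/2) : ℂ)
      + ((if 0 < z.im then 1 else -1) * Real.sqrt ((‖z‖ - z.re)/2) : ℝ) * Complex.I := by
  set r := ‖z‖ with hr
  set s : ℝ := if 0 < z.im then 1 else -1 with hs
  set x := Real.sqrt ((r + z.re)/2) with hxdef
  set y := Real.sqrt ((r - z.re)/2) with hydef
  have hre : |z.re| ≤ r := Complex.abs_re_le_norm z
  have hsq : r ^ 2 = z.re ^ 2 + z.im ^ 2 := by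
    rw [hr, Complex.sq_norm, Complex.normSq_apply]; ring
  have hrgt : |z.re| < r := by
    rcases lt_or_eq_of_le hre with h' | h'
    · exact h'
    · exfalso
      have e1 : r ^ 2 = z.re ^ 2 := by rw [← h']; exact sq_abs z.re
      have him : z.im ^ 2 = 0 := by linarith
      exact h (pow_eq_zero_iff (by norm_num) |>.mp him)
  have h1 : 0 < (r + z.re)/2 := by cases abs_lt.mp hrgt; linarith
  have h2 : 0 < (r - z.re)/2 := by cases abs_lt.mp hrgt; linarith
  have hx : x^2 = (r + z.re)/2 := Real.sq_sqrt h1.le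
  have hy : y^2 = (r - z.re)/2 := Real.sq_sqrt h2.le
  have hxy : x * y = |z.im| / 2 := by
    rw [hxdef, hydef, ← Real.sqrt_mul h1.le]
    have : (r + z.re)/2 * ((r - z.re)/2) = (|z.im|/2) ^ 2 := by
      rw [← sq_abs z.im] at hsq; nlinarith
    rw [this, Real.sqrt_sq (by positivity)]
  have hsim : s * |z.im| = z.im := by
    rcases lt_or_gt_of_ne h with hneg | hpos
    · rw [hs, if_neg (by linarith), abs_of_neg hneg]; ring
    · rw [hs, if_pos hpos, abs_of_pos hpos]; ring
  apply csqrt_unique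
  · rw [Complex.ext_iff]
    constructor
    · simp only [pow_two, Complex.mul_re, Complex.mul_im, Complex.add_re, Complex.add_im,
        Complex.ofReal_re, Complex.ofReal_im, Complex.I_re, Complex.I_im]
      have hs2 : s * s = 1 := by rcases ite_eq_or_eq (0 < z.im) (1:ℝ) (-1) with h'|h' <;>
        rw [hs, h'] <;> norm_num
      nlinarith [hx, hy]
    · simp only [pow_two, Complex.mul_re, Complex.mul_im, Complex.add_re, Complex.add_im,
        Complex.ofReal_re, Complex.ofReal_im, Complex.I_re, Complex.I_im]
      linear_combination (2*s) * hxy + hsim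
  · simp only [Complex.add_re, Complex.ofReal_re, Complex.mul_re, Complex.I_re,
      Complex.ofReal_im, Complex.I_im]
    have : 0 < x := Real.sqrt_pos.mpr h1
    simp only [mul_zero, mul_one, sub_zero, zero_mul]
    linarith

lemma alpha_at_base (k p : ℝ) (hk : 0 < k) (hkp : k < p) :
    (alphaFn k ((-p : ℝ) : ℂ)).re = -Real.sqrt (p^2 - k^2) := by
  have hp : 0 < p := hk.trans hkp
  have e1 : csqrt (Complex.I * (((-p : ℝ) : ℂ) - (k : ℂ)))
      = (Real.sqrt ((p+k)/2) : ℂ) * (1 - Complex.I) := by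
    apply csqrt_unique
    · rw [mul_pow, ← Complex.ofReal_pow, Real.sq_sqrt (by positivity)]
      push_cast
      linear_combination (((p:ℂ)+(k:ℂ))/2) * Complex.I_sq
    · have : 0 < Real.sqrt ((p+k)/2) := Real.sqrt_pos.mpr (by positivity)
      simp [Complex.mul_re]
      linarith
  have e2 : csqrt (-Complex.I * (((-p : ℝ) : ℂ) + (k : ℂ)))
      = (Real.sqrt ((p-k)/2) : ℂ) * (1 + Complex.I) := by
    apply csqrt_unique
    · rw [mul_pow, ← Complex.ofReal_pow, Real.sq_sqrt (by linarith : (0:ℝ) ≤ (p-k)/2)]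
      push_cast
      linear_combination (((p:ℂ)-(k:ℂ))/2) * Complex.I_sq
    · have : 0 < Real.sqrt ((p-k)/2) := Real.sqrt_pos.mpr (by simp; linarith)
      simp [Complex.mul_re]
      linarith
  have hprod : Real.sqrt ((p+k)/2) * Real.sqrt ((p-k)/2) = Real.sqrt (p^2 - k^2) / 2 := by
    rw [← Real.sqrt_mul (by positivity)]
    rw [show (p+k)/2 * ((p-k)/2) = (Real.sqrt (p^2-k^2)/2)^2 by
      rw [div_pow, Real.sq_sqrt (by nlinarith)]; ring]
    exact Real.sqrt_sq (by positivity)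
  unfold alphaFn
  rw [e1, e2]
  have key : -((Real.sqrt ((p+k)/2) : ℂ) * (1 - Complex.I)
      * ((Real.sqrt ((p-k)/2) : ℂ) * (1 + Complex.I)))
      = ((-(2 * (Real.sqrt ((p+k)/2) * Real.sqrt ((p-k)/2))) : ℝ) : ℂ) := by
    push_cast
    linear_combination ((Real.sqrt ((p+k)/2) : ℂ) * (Real.sqrt ((p-k)/2) : ℂ)) * Complex.I_sq
  rw [key, Complex.ofReal_re, hprod]
  ring

lemma alpha_on_line (k p t : ℝ) (hk : 0 < k) (hkp : k < p) :
    (alphaFn k (((-p : ℝ) : ℂ) + Complex.I * (t : ℂ))).re ≤ -Real.sqrt (p^2 - k^2) := by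
  have hp : 0 < p := hk.trans hkp
  set a := Real.sqrt (t^2 + (p+k)^2) with hadef
  set b := Real.sqrt (t^2 + (p-k)^2) with hbdef
  have hA : Complex.I * ((((-p : ℝ)):ℂ) + Complex.I * (t:ℂ) - (k:ℂ))
      = ((-t : ℝ):ℂ) + ((-(p+k) : ℝ):ℂ) * Complex.I := by
    push_cast; linear_combination (t:ℂ) * Complex.I_sq
  have hB : -Complex.I * ((((-p : ℝ)):ℂ) + Complex.I * (t:ℂ) + (k:ℂ))
      = ((t : ℝ):ℂ) + (((p-k) : ℝ):ℂ) * Complex.I := by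
    push_cast; linear_combination (-(t:ℂ)) * Complex.I_sq
  have hAre : (((-t : ℝ):ℂ) + ((-(p+k) : ℝ):ℂ) * Complex.I).re = -t := by simp
  have hAim : (((-t : ℝ):ℂ) + ((-(p+k) : ℝ):ℂ) * Complex.I).im = -(p+k) := by simp
  have hBre : (((t : ℝ):ℂ) + (((p-k) : ℝ):ℂ) * Complex.I).re = t := by simp
  have hBim : (((t : ℝ):ℂ) + (((p-k) : ℝ):ℂ) * Complex.I).im = p-k := by simp
  have haA : ‖((-t : ℝ):ℂ) + ((-(p+k) : ℝ):ℂ) * Complex.I‖ = a := by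
    rw [Complex.norm_def, Complex.normSq_apply, hAre, hAim, hadef]
    congr 1; ring
  have haB : ‖((t : ℝ):ℂ) + (((p-k) : ℝ):ℂ) * Complex.I‖ = b := by
    rw [Complex.norm_def, Complex.normSq_apply, hBre, hBim, hbdef]
    congr 1; ring
  have eA : csqrt (Complex.I * ((((-p : ℝ)):ℂ) + Complex.I * (t:ℂ) - (k:ℂ)))
      = (Real.sqrt ((a - t)/2) : ℂ) + ((-Real.sqrt ((a + t)/2) : ℝ) : ℂ) * Complex.I := by
    rw [hA, csqrt_of_im_ne (by rw [hAim]; intro h; linarith)]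
    rw [hAre, hAim, haA, if_neg (by intro h; linarith)]
    rw [show (a + -t)/2 = (a-t)/2 by ring, show (a - -t)/2 = (a+t)/2 by ring]
    push_cast; ring
  have eB : csqrt (-Complex.I * ((((-p : ℝ)):ℂ) + Complex.I * (t:ℂ) + (k:ℂ)))
      = (Real.sqrt ((b + t)/2) : ℂ) + ((Real.sqrt ((b - t)/2) : ℝ) : ℂ) * Complex.I := by
    rw [hB, csqrt_of_im_ne (by rw [hBim]; intro h; linarith)]
    rw [hBre, hBim, haB, if_pos (by linarith)]
    push_cast; ring
  have ha2 : a^2 = t^2 + (p+k)^2 := Real.sq_sqrt (by positivity)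
  have hb2 : b^2 = t^2 + (p-k)^2 := Real.sq_sqrt (by positivity)
  have hta : |t| ≤ a := by
    rw [hadef, ← Real.sqrt_sq_eq_abs]
    exact Real.sqrt_le_sqrt (by nlinarith)
  have htb : |t| ≤ b := by
    rw [hbdef, ← Real.sqrt_sq_eq_abs]
    exact Real.sqrt_le_sqrt (by nlinarith)
  obtain ⟨hta1, hta2⟩ := abs_le.mp hta
  obtain ⟨htb1, htb2⟩ := abs_le.mp htb
  have h1 : (0:ℝ) ≤ (a - t)/2 := by linarith
  have h2 : (0:ℝ) ≤ (a + t)/2 := by linarith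
  have h3 : (0:ℝ) ≤ (b + t)/2 := by linarith
  have h4 : (0:ℝ) ≤ (b - t)/2 := by linarith
  set u := Real.sqrt ((a - t)/2) * Real.sqrt ((b + t)/2) with hu
  set v := Real.sqrt ((a + t)/2) * Real.sqrt ((b - t)/2) with hv
  have hre : (alphaFn k (((-p : ℝ) : ℂ) + Complex.I * (t : ℂ))).re = -(u + v) := by
    unfold alphaFn
    rw [eA, eB]
    simp [Complex.mul_re, hu, hv]
  rw [hre]
  have hc : (0:ℝ) < p^2 - k^2 := by nlinarith
  have hu2 : u^2 = (a-t)/2 * ((b+t)/2) := by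
    rw [hu, mul_pow, Real.sq_sqrt h1, Real.sq_sqrt h3]
  have hv2 : v^2 = (a+t)/2 * ((b-t)/2) := by
    rw [hv, mul_pow, Real.sq_sqrt h2, Real.sq_sqrt h4]
  have huv : u * v = (p^2 - k^2)/4 := by
    rw [hu, hv, ← Real.sqrt_mul h1, ← Real.sqrt_mul h2,
      ← Real.sqrt_mul (mul_nonneg h1 h3)]
    rw [show (a-t)/2 * ((b+t)/2) * ((a+t)/2 * ((b-t)/2)) = ((p^2-k^2)/4)^2 by
      linear_combination ((b+t)*(b-t)/16) * ha2 + ((p+k)^2/16) * hb2]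
    exact Real.sqrt_sq (by linarith)
  have hab : t^2 + (p^2 - k^2) ≤ a * b := by
    have hab2 : (t^2 + (p^2-k^2))^2 ≤ (a*b)^2 := by nlinarith [sq_nonneg t, sq_nonneg (t*k)]
    nlinarith [Real.sqrt_nonneg (t^2 + (p+k)^2), Real.sqrt_nonneg (t^2 + (p-k)^2)]
  have huvnn : 0 ≤ u + v := by positivity
  have hsum : p^2 - k^2 ≤ (u + v)^2 := by nlinarith
  have : Real.sqrt (p^2 - k^2) ≤ u + v := by
    rw [← Real.sqrt_sq huvnn]
    exact Real.sqrt_le_sqrt hsum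
  linarith

/-- On the vertical line ξ = -π/d + it, Re α(-π/d + it) ≤ Re α(-π/d) = -√((π/d)² - k²). -/
theorem stmt10 (k d : ℝ) (hk : 0 < k) (hd : 0 < d) (hkd : k < Real.pi / d) :
    (alphaFn k ((-(Real.pi / d) : ℝ) : ℂ)).re = -Real.sqrt ((Real.pi / d)^2 - k^2) ∧
    ∀ t : ℝ,
      (alphaFn k (((-(Real.pi / d) : ℝ) : ℂ) + Complex.I * (t : ℂ))).re
        ≤ (alphaFn k ((-(Real.pi / d) : ℝ) : ℂ)).re := by
  have h1 := alpha_at_base k (Real.pi / d) hk hkd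
  refine ⟨h1, fun t => ?_⟩
  rw [h1]
  exact alpha_on_line k (Real.pi / d) t hk hkd
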